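/- arXiv:2207.11648 — 5 statements merged into one kernel-verified Lean document; each statement's English description precedes it below -/
import Mathlib

section
/- If f(x) = u(x)·v(x) in ℤ[x] with f(0) ≠ 0, and W(x) = u(x)·ṽ(x), then the sum of squares of the coefficients of W equals the sum of squares of the coefficients of f. -/
open Polynomial

theorem stmt_2 (f u v W : Polynomial ℤ) (hf0 : f.eval 0 ≠ 0) (hfu : f = u * v)
    (hW : W = u * v.reverse) :
    ∑ i ∈ Finset.range (W.natDegree + 1), (W.coeff i) ^ 2 =
      ∑ i ∈ Finset.range (f.natDegree + 1), (f.coeff i) ^ 2 := by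
  have hf0' : f.coeff 0 ≠ 0 := by rwa [coeff_zero_eq_eval_zero]
  have hu0 : u.coeff 0 ≠ 0 := by
    intro h; apply hf0'; rw [hfu, mul_coeff_zero, h, zero_mul]
  have hv0 : v.coeff 0 ≠ 0 := by
    intro h; apply hf0'; rw [hfu, mul_coeff_zero, h, mul_zero]
  have hune : u ≠ 0 := fun h => hu0 (by simp [h])
  have hvne : v ≠ 0 := fun h => hv0 (by simp [h])
  have hvtd : v.natTrailingDegree = 0 := natTrailingDegree_eq_zero.mpr (Or.inr hv0)
  have hvmir : v.mirror = v.reverse := by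
    rw [Polynomial.mirror, hvtd, pow_zero, mul_one]
  have hWf : W = u * v.mirror := by rw [hW, hvmir]
  have hWmir : W.mirror = u.mirror * v := by
    rw [hWf, mirror_mul_of_domain, mirror_mirror]
  have hkey : W * W.mirror = f * f.mirror := by
    rw [hWmir, hWf, hfu, mirror_mul_of_domain]; ring
  have hW0 : W.coeff 0 ≠ 0 := by
    rw [hW, mul_coeff_zero, coeff_zero_reverse]
    exact mul_ne_zero hu0 (leadingCoeff_ne_zero.mpr hvne)
  have hWtd : W.natTrailingDegree = 0 := natTrailingDegree_eq_zero.mpr (Or.inr hW0)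
  have hftd : f.natTrailingDegree = 0 := natTrailingDegree_eq_zero.mpr (Or.inr hf0')
  have hdeg : W.natDegree = f.natDegree := by
    rw [hWf, hfu, natDegree_mul hune (fun h => hvne (by simpa [h] using mirror_eq_zero.mp h)),
      natDegree_mul hune hvne, mirror_natDegree]
  have h1 := W.coeff_mul_mirror
  have h2 := f.coeff_mul_mirror
  rw [hkey, hWtd, add_zero, hdeg] at h1
  rw [hftd, add_zero] at h2
  have := h1.symm.trans h2
  have eW : (W.sum fun _ x => x ^ 2) = ∑ i ∈ Finset.range (W.natDegree + 1), W.coeff i ^ 2 :=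
    Polynomial.sum_over_range _ (f := fun _ x => x ^ 2) (fun n => zero_pow two_ne_zero)
  have ef : (f.sum fun _ x => x ^ 2) = ∑ i ∈ Finset.range (f.natDegree + 1), f.coeff i ^ 2 :=
    Polynomial.sum_over_range _ (f := fun _ x => x ^ 2) (fun n => zero_pow two_ne_zero)
  rw [← eW, ← ef]
  exact this
end

section
/- Let ε ∈ (0,1), let κ = ⌊1/ε⌋ + 1, let ρ ≥ 2 be an integer, and let k₀ ≥ 2 be a real number. Let v₁ < v₂ < ⋯ < v_ρ be non-negative integers with v_ρ ≥ max{ κ^{2ρ−2}·(2(ε − 1/κ))^{−1}, k₀(κ^{ρ−1} + ε) }. Then there exists an integer k with k₀ ≤ k < v_ρ/(1−ε) such that for every j ∈ {1,…,ρ}, the residue v_j mod k lies in [0, εk) ∪ ((1−ε)k, k). -/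
set_option maxHeartbeats 1000000

lemma dirichlet_sim (d Q : ℕ) (hQ : 0 < Q) (α : Fin d → ℝ) :
    ∃ q : ℕ, 1 ≤ q ∧ q ≤ Q ^ d ∧ ∀ i, ∃ m : ℤ, |(q : ℝ) * α i - (m : ℝ)| < 1 / Q := by
  have hQR : (0 : ℝ) < (Q : ℝ) := by exact_mod_cast hQ
  have key : ∀ x y : ℕ, x < y → y ≤ Q ^ d →
      (∀ i, ⌊Int.fract ((x : ℝ) * α i) * Q⌋ = ⌊Int.fract ((y : ℝ) * α i) * Q⌋) →
      ∃ q : ℕ, 1 ≤ q ∧ q ≤ Q ^ d ∧ ∀ i, ∃ m : ℤ, |(q : ℝ) * α i - (m : ℝ)| < 1 / Q := by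
    intro x y hxy hyN hfloor
    refine ⟨y - x, by omega, by omega, fun i => ?_⟩
    set u : ℝ := (x : ℝ) * α i with hu
    set w : ℝ := (y : ℝ) * α i with hw
    refine ⟨⌊w⌋ - ⌊u⌋, ?_⟩
    have h1 : ((y - x : ℕ) : ℝ) * α i = w - u := by
      rw [Nat.cast_sub (le_of_lt hxy)]; rw [hu, hw]; ring
    have hfl := hfloor i
    have hu1 : (⌊Int.fract u * Q⌋ : ℝ) ≤ Int.fract u * Q := Int.floor_le _
    have hu2 : Int.fract u * Q < ⌊Int.fract u * Q⌋ + 1 := Int.lt_floor_add_one _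
    have hw1 : (⌊Int.fract w * Q⌋ : ℝ) ≤ Int.fract w * Q := Int.floor_le _
    have hw2 : Int.fract w * Q < ⌊Int.fract w * Q⌋ + 1 := Int.lt_floor_add_one _
    rw [hfl] at hu1 hu2
    have hQQ : (1 / (Q : ℝ)) * Q = 1 := by field_simp
    have habs : |Int.fract w - Int.fract u| < 1 / Q := by
      rw [abs_lt]
      constructor
      · nlinarith
      · nlinarith
    have hfu : (⌊u⌋ : ℝ) + Int.fract u = u := Int.floor_add_fract u
    have hfw : (⌊w⌋ : ℝ) + Int.fract w = w := Int.floor_add_fract w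
    rw [h1]
    have : w - u - ((⌊w⌋ : ℤ) - (⌊u⌋ : ℤ) : ℤ) = Int.fract w - Int.fract u := by
      push_cast; linarith
    rw [this]
    exact habs
  let f : Fin (Q ^ d + 1) → (Fin d → Fin Q) := fun n i =>
    ⟨(⌊Int.fract (((n : ℕ) : ℝ) * α i) * Q⌋).toNat, by
      have h0 : (0 : ℝ) ≤ Int.fract (((n : ℕ) : ℝ) * α i) := Int.fract_nonneg _
      have h1 : Int.fract (((n : ℕ) : ℝ) * α i) < 1 := Int.fract_lt_one _
      have h2 : ⌊Int.fract (((n : ℕ) : ℝ) * α i) * Q⌋ < Q := by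
        apply Int.floor_lt.mpr; push_cast; nlinarith
      have h3 : 0 ≤ ⌊Int.fract (((n : ℕ) : ℝ) * α i) * Q⌋ :=
        Int.floor_nonneg.mpr (by positivity)
      omega⟩
  have hcard : Fintype.card (Fin d → Fin Q) < Fintype.card (Fin (Q ^ d + 1)) := by
    simp [Fintype.card_fun]
  obtain ⟨n1, n2, hne, hfeq⟩ := Fintype.exists_ne_map_eq_of_card_lt f hcard
  have hval : ∀ (a b : Fin (Q ^ d + 1)), f a = f b → ∀ i,
      ⌊Int.fract (((a : ℕ) : ℝ) * α i) * Q⌋ = ⌊Int.fract (((b : ℕ) : ℝ) * α i) * Q⌋ := by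
    intro a b hab i
    have := congrArg Fin.val (congrFun hab i)
    simp only [f] at this
    have ha := Int.floor_nonneg.mpr
      (mul_nonneg (Int.fract_nonneg (((a : ℕ) : ℝ) * α i)) (le_of_lt hQR))
    have hb := Int.floor_nonneg.mpr
      (mul_nonneg (Int.fract_nonneg (((b : ℕ) : ℝ) * α i)) (le_of_lt hQR))
    omega
  rcases lt_or_gt_of_ne (show (n1 : ℕ) ≠ (n2 : ℕ) from fun h => hne (Fin.ext h)) with hlt | hlt
  · exact key n1 n2 hlt (by omega) (hval n1 n2 hfeq)
  · exact key n2 n1 hlt (by omega) (hval n2 n1 hfeq.symm)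

lemma mod_split (vj k m : ℕ) (ε : ℝ) (hk : 0 < k) (hε1 : ε < 1)
    (h : |(vj : ℝ) - (m : ℝ) * k| < ε * k) :
    ((vj % k : ℕ) : ℝ) < ε * k ∨ (1 - ε) * k < ((vj % k : ℕ) : ℝ) := by
  have hkR : (0 : ℝ) < (k : ℝ) := by exact_mod_cast hk
  rw [abs_lt] at h
  obtain ⟨hlo, hhi⟩ := h
  have hεk : ε * k < k := by nlinarith
  rcases le_or_gt (m * k) vj with hc | hc
  · left
    have ht : ((vj - m * k : ℕ) : ℝ) = (vj : ℝ) - m * k := by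
      push_cast [Nat.cast_sub hc]; ring
    have htk : vj - m * k < k := by
      have : ((vj - m * k : ℕ) : ℝ) < (k : ℝ) := by rw [ht]; linarith
      exact_mod_cast this
    have hveq : vj = (vj - m * k) + k * m := by
      rw [mul_comm k m]; exact (Nat.sub_add_cancel hc).symm
    have hmod : vj % k = vj - m * k := by
      conv_lhs => rw [hveq]
      rw [Nat.add_mul_mod_self_left, Nat.mod_eq_of_lt htk]
    rw [hmod, ht]; linarith
  · right
    have hm1 : 1 ≤ m := by
      rcases Nat.eq_zero_or_pos m with h0 | h1
      · exfalso; rw [h0, zero_mul] at hc; omega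
      · exact h1
    have hcR : (vj : ℝ) < (m : ℝ) * k := by exact_mod_cast hc
    have hge : (m - 1) * k ≤ vj := by
      have h2 : (((m - 1) * k : ℕ) : ℝ) ≤ (vj : ℝ) := by
        push_cast [Nat.cast_sub hm1]; nlinarith
      exact_mod_cast h2
    have hs : ((vj - (m - 1) * k : ℕ) : ℝ) = (vj : ℝ) - ((m : ℝ) - 1) * k := by
      push_cast [Nat.cast_sub hge, Nat.cast_sub hm1]; ring
    have hsk : vj - (m - 1) * k < k := by
      have hr : ((vj - (m - 1) * k : ℕ) : ℝ) < (k : ℝ) := by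
        rw [hs]; nlinarith
      exact_mod_cast hr
    have hveq : vj = (vj - (m - 1) * k) + k * (m - 1) := by
      rw [mul_comm k (m - 1)]; exact (Nat.sub_add_cancel hge).symm
    have hmod : vj % k = vj - (m - 1) * k := by
      conv_lhs => rw [hveq]
      rw [Nat.add_mul_mod_self_left, Nat.mod_eq_of_lt hsk]
    rw [hmod, hs]
    nlinarith

theorem stmt_3 (ε k₀ : ℝ) (hε0 : 0 < ε) (hε1 : ε < 1) (hk₀ : 2 ≤ k₀)
    (ρ : ℕ) (hρ : 2 ≤ ρ) (v : Fin ρ → ℕ) (hv : StrictMono v)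
    (κ : ℝ) (hκ : κ = (⌊1 / ε⌋ : ℝ) + 1)
    (hbig : max (κ ^ (2 * ρ - 2) / (2 * (ε - 1 / κ))) (k₀ * (κ ^ (ρ - 1) + ε))
      ≤ ((v ⟨ρ - 1, by omega⟩ : ℕ) : ℝ)) :
    ∃ k : ℕ, k₀ ≤ (k : ℝ) ∧ (k : ℝ) < ((v ⟨ρ - 1, by omega⟩ : ℕ) : ℝ) / (1 - ε) ∧
      ∀ j : Fin ρ, ((v j % k : ℕ) : ℝ) < ε * k ∨ (1 - ε) * k < ((v j % k : ℕ) : ℝ) := by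
  -- basic κ facts
  have hfloor1 : (1 : ℤ) ≤ ⌊1 / ε⌋ := by
    apply Int.le_floor.mpr
    push_cast
    rw [le_div_iff₀ hε0]
    linarith
  have hfloor1R : (1 : ℝ) ≤ ((⌊1 / ε⌋ : ℤ) : ℝ) := by exact_mod_cast hfloor1
  have hκ2 : (2 : ℝ) ≤ κ := by rw [hκ]; linarith
  have hκpos : (0 : ℝ) < κ := by linarith
  have h1εκ : 1 / ε < κ := by rw [hκ]; exact Int.lt_floor_add_one _
  have hinvκ : 1 / κ < ε := by
    rw [div_lt_iff₀ hκpos]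
    have := (div_lt_iff₀ hε0).mp h1εκ
    linarith
  have hinvκ0 : (0 : ℝ) < 1 / κ := by positivity
  -- natural number version of κ
  set K : ℕ := (⌊1 / ε⌋).toNat + 1 with hK
  have hKκ : ((K : ℕ) : ℝ) = κ := by
    have h := Int.toNat_of_nonneg (by omega : (0 : ℤ) ≤ ⌊1 / ε⌋)
    have h2 : ((⌊1 / ε⌋.toNat : ℕ) : ℝ) = ((⌊1 / ε⌋ : ℤ) : ℝ) := by exact_mod_cast congrArg (Int.cast : ℤ → ℝ) h
    rw [hK, hκ, Nat.cast_add, Nat.cast_one, h2]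
  have hKpos : 0 < K := by omega
  -- the largest value
  set V : ℝ := ((v ⟨ρ - 1, by omega⟩ : ℕ) : ℝ) with hV
  have hb1 : κ ^ (2 * ρ - 2) / (2 * (ε - 1 / κ)) ≤ V := le_trans (le_max_left _ _) hbig
  have hb2 : k₀ * (κ ^ (ρ - 1) + ε) ≤ V := le_trans (le_max_right _ _) hbig
  have hκpow : (0 : ℝ) < κ ^ (ρ - 1) := pow_pos hκpos _
  have hV0 : (0 : ℝ) < V := by nlinarith
  -- Dirichlet simultaneous approximation
  obtain ⟨q, hq1, hqN, hdir⟩ := dirichlet_sim (ρ - 1) K hKpos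
    (fun i => ((v ⟨i.val, by have := i.isLt; omega⟩ : ℕ) : ℝ) / V)
  have hq1R : (1 : ℝ) ≤ (q : ℝ) := by exact_mod_cast hq1
  have hqκ : (q : ℝ) ≤ κ ^ (ρ - 1) := by
    have : ((q : ℕ) : ℝ) ≤ ((K ^ (ρ - 1) : ℕ) : ℝ) := by exact_mod_cast hqN
    rw [Nat.cast_pow, hKκ] at this
    exact this
  -- for each j there is a good integer m
  have hmj : ∀ j : Fin ρ, ∃ m : ℤ, 0 ≤ m ∧
      |(q : ℝ) * (((v j : ℕ) : ℝ) / V) - (m : ℝ)| < 1 / κ := by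
    intro j
    have hKR1 : (1 : ℝ) ≤ (K : ℝ) := by exact_mod_cast hKpos
    rcases lt_or_ge j.val (ρ - 1) with hj | hj
    · obtain ⟨m, hm⟩ := hdir ⟨j.val, hj⟩
      have hvj : v ⟨j.val, by have := j.isLt; omega⟩ = v j := congrArg v (Fin.ext rfl)
      simp only [hvj] at hm
      rw [hKκ] at hm
      refine ⟨m, ?_, hm⟩
      have hα0 : (0 : ℝ) ≤ (q : ℝ) * (((v j : ℕ) : ℝ) / V) := by positivity
      rw [abs_lt] at hm
      have : (-1 : ℝ) < (m : ℝ) := by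
        have h1K : 1 / κ ≤ 1 := by
          rw [div_le_one hκpos]; linarith
        linarith [hm.2]
      have : (-1 : ℤ) < m := by exact_mod_cast this
      omega
    · have hjtop : j = ⟨ρ - 1, by omega⟩ := Fin.ext (by have := j.isLt; simp; omega)
      refine ⟨(q : ℤ), by positivity, ?_⟩
      rw [hjtop]
      have hd : ((v (⟨ρ - 1, by omega⟩ : Fin ρ) : ℕ) : ℝ) / V = 1 := div_self (ne_of_gt hV0)
      rw [hd]
      simp
      positivity
  -- set up the interval
  set δ : ℝ := ε - 1 / κ with hδ
  have hδ0 : (0 : ℝ) < δ := by rw [hδ]; linarith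
  have hδε : δ < ε := by rw [hδ]; linarith
  have hqδ1 : (0 : ℝ) < (q : ℝ) + δ := by linarith
  have hqδ2 : (0 : ℝ) < (q : ℝ) - δ := by linarith
  have hpow2 : κ ^ (ρ - 1) * κ ^ (ρ - 1) = κ ^ (2 * ρ - 2) := by
    rw [← pow_add]
    congr 1
    omega
  have hbig1 : κ ^ (2 * ρ - 2) ≤ 2 * δ * V := by
    have h2δ : (0 : ℝ) < 2 * (ε - 1 / κ) := by linarith
    have := (div_le_iff₀ h2δ).mp hb1
    rw [hδ]; nlinarith
  have hq2 : (q : ℝ) * (q : ℝ) ≤ κ ^ (2 * ρ - 2) := by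
    rw [← hpow2]
    nlinarith
  set A : ℝ := V / ((q : ℝ) + δ) with hA
  set B : ℝ := V / ((q : ℝ) - δ) with hB
  have hA0 : (0 : ℝ) < A := by rw [hA]; positivity
  have hlen : A + 1 ≤ B := by
    have hpos : (0 : ℝ) < ((q : ℝ) - δ) * ((q : ℝ) + δ) := mul_pos hqδ2 hqδ1
    have hd : B - A = 2 * δ * V / (((q : ℝ) - δ) * ((q : ℝ) + δ)) := by
      rw [hA, hB]
      field_simp
      ring
    have h1 : 1 ≤ 2 * δ * V / (((q : ℝ) - δ) * ((q : ℝ) + δ)) := by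
      rw [le_div_iff₀ hpos]
      nlinarith [hq2, hbig1, hδ0, hδε]
    linarith [hd, h1]
  -- choose k
  set k : ℕ := ⌊A⌋₊ + 1 with hk
  have hAk : A < (k : ℝ) := by
    rw [hk]; push_cast; exact Nat.lt_floor_add_one A
  have hkB : (k : ℝ) ≤ B := by
    have h1 : ((⌊A⌋₊ : ℕ) : ℝ) ≤ A := Nat.floor_le (le_of_lt hA0)
    rw [hk]; push_cast; linarith
  have hk0 : 0 < k := by omega
  have hkR : (0 : ℝ) < (k : ℝ) := lt_trans hA0 hAk
  have hvk1 : V < ((q : ℝ) + δ) * k := by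
    have h := (div_lt_iff₀ hqδ1).mp (show V / ((q : ℝ) + δ) < (k : ℝ) from hAk)
    linarith [h]
  have hvk2 : ((q : ℝ) - δ) * k ≤ V := by
    have h := (le_div_iff₀ hqδ2).mp (show (k : ℝ) ≤ V / ((q : ℝ) - δ) from hkB)
    linarith [h]
  refine ⟨k, ?_, ?_, ?_⟩
  · -- k₀ ≤ k
    have hAk₀ : k₀ ≤ A := by
      rw [hA, le_div_iff₀ hqδ1]
      have h1 : (q : ℝ) + δ ≤ κ ^ (ρ - 1) + ε := by linarith
      nlinarith
    linarith
  · -- k < V / (1 - ε)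
    have h1ε : (0 : ℝ) < 1 - ε := by linarith
    have hBlt : B < V / (1 - ε) := by
      rw [hB]
      apply div_lt_div_of_pos_left hV0 h1ε
      linarith
    exact lt_of_le_of_lt hkB hBlt
  · -- the mod condition
    intro j
    obtain ⟨m, hm0, hmlt⟩ := hmj j
    set a : ℝ := ((v j : ℕ) : ℝ) with ha
    have ha0 : (0 : ℝ) ≤ a := by rw [ha]; positivity
    have hav : a ≤ V := by
      rw [ha, hV]
      have hj : j ≤ (⟨ρ - 1, by omega⟩ : Fin ρ) := by
        have := j.isLt
        exact Fin.mk_le_mk.mpr (by omega) |>.trans_eq rfl |>.trans_eq rfl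
      exact_mod_cast Nat.cast_le.mpr (hv.monotone hj)
    have hα1 : a / V ≤ 1 := (div_le_one hV0).mpr hav
    have hα0 : (0 : ℝ) ≤ a / V := by positivity
    -- |V/k - q| ≤ δ
    have he2 : |V / k - (q : ℝ)| ≤ δ := by
      rw [abs_le]
      constructor
      · have : (q : ℝ) - δ ≤ V / k := (le_div_iff₀ hkR).mpr (by nlinarith)
        linarith
      · have : V / k < (q : ℝ) + δ := (div_lt_iff₀ hkR).mpr (by nlinarith)
        linarith
    have hVne : V ≠ 0 := ne_of_gt hV0
    have hkne : (k : ℝ) ≠ 0 := ne_of_gt hkR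
    have he3 : a / k - (m : ℝ) = (a / V) * (V / k - q) + ((q : ℝ) * (a / V) - m) := by
      field_simp
      ring
    have hkey : |a / k - (m : ℝ)| < ε := by
      rw [he3]
      calc |(a / V) * (V / k - q) + ((q : ℝ) * (a / V) - m)|
          ≤ |(a / V) * (V / k - q)| + |(q : ℝ) * (a / V) - m| := abs_add_le _ _
        _ = (a / V) * |V / k - q| + |(q : ℝ) * (a / V) - m| := by
            rw [abs_mul, abs_of_nonneg hα0]
        _ ≤ 1 * δ + |(q : ℝ) * (a / V) - m| := by
            have := mul_le_mul hα1 he2 (abs_nonneg _) (by norm_num : (0:ℝ) ≤ 1)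
            linarith
        _ < 1 * δ + 1 / κ := by linarith [hmlt]
        _ = ε := by rw [hδ]; ring
    have hkey2 : |a - (m : ℝ) * k| < ε * k := by
      have heq : a - (m : ℝ) * k = (a / k - m) * k := by field_simp
      rw [heq, abs_mul, abs_of_pos hkR]
      exact mul_lt_mul_of_pos_right hkey hkR
    have hmnat : ((m.toNat : ℕ) : ℝ) = (m : ℝ) := by
      exact_mod_cast congrArg (Int.cast : ℤ → ℝ) (Int.toNat_of_nonneg hm0)
    have := mod_split (v j) k m.toNat ε hk0 hε1 (by rw [hmnat]; exact hkey2)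
    exact this
end

section
/- The polynomial F(x,y) = 1 − x(x+1)y − 2x²y² − x²(x+1)y³ + x⁴y⁴ is irreducible in ℤ[x,y]. -/
/-!
View `F` as a quartic in `y` over `ℤ[x]`: its constant term is `1`, so it is primitive, and its
leading coefficient is `x⁴`. Specialising `x ↦ 1` and reducing mod `3` keeps the degree and gives
`y⁴ + y³ + y² + y + 1 = Φ₅` over `𝔽₃`, which is irreducible because `3` has order `4` modulo `5`.
A factorisation of `F` would specialise to one of `Φ₅` without losing degree, so one factor has
degree `0` in `y`, i.e. is a constant of `ℤ[x]` dividing the primitive `F`, hence a unit.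
-/

open Polynomial

namespace Polynomial

theorem isPrimitive_of_isUnit_coeff {R : Type*} [CommSemiring R] {f : R[X]} {n : ℕ}
    (hn : IsUnit (f.coeff n)) : f.IsPrimitive :=
  isPrimitive_iff_isUnit_of_C_dvd.mpr fun _ hr =>
    isUnit_of_dvd_unit ((C_dvd_iff_dvd_coeff _ _).mp hr n) hn

theorem IsPrimitive.isUnit_of_isUnit_map {R S : Type*} [CommSemiring R] [CommRing S] [IsDomain S]
    {φ : R →+* S} {f : R[X]} (hf : f.IsPrimitive) (hlc : φ f.leadingCoeff ≠ 0)
    (hu : IsUnit (f.map φ)) : IsUnit f := by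
  have hdeg : f.natDegree = 0 := by
    rw [← natDegree_map_of_leadingCoeff_ne_zero φ hlc]
    exact natDegree_eq_zero_of_isUnit hu
  rw [eq_C_of_natDegree_eq_zero hdeg] at hf ⊢
  exact isUnit_C.mpr (isPrimitive_iff_isUnit_of_C_dvd.mp hf _ dvd_rfl)

theorem IsPrimitive.irreducible_of_irreducible_map_of_leadingCoeff_ne_zero {R S : Type*}
    [CommSemiring R] [NoZeroDivisors R] [CommRing S] [IsDomain S] {φ : R →+* S} {f : R[X]}
    (hf : f.IsPrimitive) (hlc : φ f.leadingCoeff ≠ 0) (h_irr : Irreducible (f.map φ)) :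
    Irreducible f := by
  refine ⟨fun h => h_irr.not_isUnit (h.map (mapRingHom φ)), fun a b h => ?_⟩
  have hlc_ab : φ a.leadingCoeff * φ b.leadingCoeff ≠ 0 := by
    rwa [← map_mul, ← leadingCoeff_mul, ← h]
  refine (h_irr.isUnit_or_isUnit (by rw [h, Polynomial.map_mul])).imp ?_ ?_
  · exact (isPrimitive_of_dvd hf (Dvd.intro _ h.symm)).isUnit_of_isUnit_map
      (left_ne_zero_of_mul hlc_ab)
  · exact (isPrimitive_of_dvd hf (Dvd.intro_left _ h.symm)).isUnit_of_isUnit_map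
      (right_ne_zero_of_mul hlc_ab)

end Polynomial

theorem irreducible_cyclotomic_five_zmod_three : Irreducible (cyclotomic 5 (ZMod 3)) := by
  have : Fact (Nat.Prime 5) := ⟨by norm_num⟩
  refine ZMod.irreducible_of_dvd_cyclotomic_of_natDegree (by norm_num) dvd_rfl ?_
  rw [natDegree_cyclotomic, Nat.totient_prime this.out]
  exact ((orderOf_eq_iff (by norm_num)).mpr ⟨by decide, by decide⟩).symm

theorem irreducible_quartic_of_ringHom_zmod_three {A : Type*} [CommRing A] [NoZeroDivisors A]
    {t : A} (φ : A →+* ZMod 3) (ht : φ t = 1) :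
    Irreducible (C (t ^ 4) * X ^ 4 - C (t ^ 2 * (t + 1)) * X ^ 3 - C (2 * t ^ 2) * X ^ 2
      - C (t * (t + 1)) * X + 1) := by
  set F : A[X] := C (t ^ 4) * X ^ 4 - C (t ^ 2 * (t + 1)) * X ^ 3 - C (2 * t ^ 2) * X ^ 2
      - C (t * (t + 1)) * X + 1 with hF
  have hmap : F.map φ = cyclotomic 5 (ZMod 3) := by
    have : Fact (Nat.Prime 5) := ⟨by norm_num⟩
    simp only [hF, map_pow, map_mul, map_add, map_one, map_ofNat C 2, Polynomial.map_add,
      Polynomial.map_sub, Polynomial.map_mul, Polynomial.map_pow, map_C, ht, one_pow, map_X,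
      one_mul, Polynomial.map_one, Polynomial.map_ofNat, mul_one, cyclotomic_prime,
      Finset.sum_range_succ, Finset.range_one, Finset.sum_singleton, pow_zero, pow_one]
    have h3 : (3 : (ZMod 3)[X]) = 0 := by exact_mod_cast CharP.cast_eq_zero (ZMod 3)[X] 3
    linear_combination -(X ^ 3 + X ^ 2 + X) * h3
  have hcoeff0 : F.coeff 0 = 1 := by simp [hF]
  have hcoeff4 : F.coeff 4 = t ^ 4 := by
    simp only [hF, coeff_add, coeff_sub, coeff_C_mul, coeff_X_pow, coeff_one, coeff_X]
    norm_num
  have ht4 : t ^ 4 ≠ 0 := fun h => by simpa [ht] using congrArg φ h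
  have hlc : F.leadingCoeff = t ^ 4 := by
    rw [leadingCoeff, natDegree_eq_of_le_of_coeff_ne_zero (by rw [hF]; compute_degree)
      (hcoeff4 ▸ ht4), hcoeff4]
  have hprim : F.IsPrimitive := isPrimitive_of_isUnit_coeff (hcoeff0 ▸ isUnit_one)
  exact hprim.irreducible_of_irreducible_map_of_leadingCoeff_ne_zero (by simp [hlc, ht])
    (hmap ▸ irreducible_cyclotomic_five_zmod_three)

open MvPolynomial

theorem stmt_8 :
    Irreducible
      (1 - X 0 * (X 0 + 1) * X 1 - 2 * (X 0) ^ 2 * (X 1) ^ 2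
        - (X 0) ^ 2 * (X 0 + 1) * (X 1) ^ 3 + (X 0) ^ 4 * (X 1) ^ 4 :
        MvPolynomial (Fin 2) ℤ) := by
  set e := (renameEquiv ℤ (Equiv.swap (0 : Fin 2) 1)).trans (finSuccEquiv ℤ 1)
  have he0 : e (X 0) = Polynomial.C (X 0) := by
    simp only [e, AlgEquiv.trans_apply, renameEquiv_apply, rename_X, Equiv.swap_apply_left,
      show (1 : Fin 2) = Fin.succ 0 from rfl, finSuccEquiv_X_succ]
  have he1 : e (X 1) = Polynomial.X := by
    simp only [e, AlgEquiv.trans_apply, renameEquiv_apply, rename_X, Equiv.swap_apply_right]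
    exact finSuccEquiv_X_zero
  refine (MulEquiv.irreducible_iff e).mp ?_
  rw [show e _ = Polynomial.C (X 0 ^ 4) * Polynomial.X ^ 4
      - Polynomial.C (X 0 ^ 2 * (X 0 + 1)) * Polynomial.X ^ 3
      - Polynomial.C (2 * X 0 ^ 2) * Polynomial.X ^ 2
      - Polynomial.C (X 0 * (X 0 + 1)) * Polynomial.X + 1 by
    simp only [map_add, map_sub, map_mul, map_one, map_pow, map_ofNat, he0, he1]
    ring]
  exact irreducible_quartic_of_ringHom_zmod_three
    (eval₂Hom (Int.castRingHom (ZMod 3)) fun _ => 1) (by simp)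
end

section
/- The bivariate polynomial 1 − x^a·y − (x^a+1)²·x^a·y² − x^{3a}·y³ + x^{4a}·y⁴ is irreducible in ℤ[x,y] for every positive integer a. -/
/-!
View the polynomial as a quartic in `Y = X 1` over `ℤ[x]`, `x = X 0`, with constant coefficient 1.
In a factorization both factors may be normalized to constant coefficient 1, and their leading
coefficients are then `±x^i`, `±x^j` with `i + j = 4a`. A linear factor `1 + fY` makes `-f` a root
of the reversed quartic, which fails on the coefficient of `x^(2a+2i)`. For two quadratic factors
`1 + bY + cY²`, `1 + dY + eY²`, the `Y³`-coefficient forces `c = e = x^(2a)` (otherwise evaluation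
at `x = 1` or a parity argument fails), and then `(b - d)² = x^a (4x^(2a) + 17x^a + 4)`. This is
not a square: at `x = 16` it becomes `S² (4S⁴ + 17S² + 4)` with `S = 4^a`, and the second factor
lies strictly between `(2S² + 4)²` and `(2S² + 5)²`.
-/

theorem Int.not_isSquare_sq_mul_of_not_isSquare {S W : ℤ} (hS : S ≠ 0) (hW : ¬IsSquare W) :
    ¬IsSquare (S ^ 2 * W) := by
  rintro ⟨r, hr⟩
  obtain ⟨t, rfl⟩ : S ∣ r := (Int.pow_dvd_pow_iff two_ne_zero).mp ⟨W, by rw [sq r, ← hr]⟩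
  exact hW ⟨t, mul_left_cancel₀ (pow_ne_zero 2 hS) (by linear_combination hr)⟩

theorem Int.not_isSquare_four_mul_pow_four_add {S : ℤ} (hS : 4 ≤ S) :
    ¬IsSquare (4 * S ^ 4 + 17 * S ^ 2 + 4) := by
  rintro ⟨r, hr⟩
  have hlow : 2 * S ^ 2 + 4 < |r| := by
    apply lt_of_pow_lt_pow_left₀ 2 (abs_nonneg r)
    rw [sq_abs]; nlinarith
  have hhigh : |r| < 2 * S ^ 2 + 5 := by
    apply lt_of_pow_lt_pow_left₀ 2 (by positivity)
    rw [sq_abs]; nlinarith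
  omega

namespace Polynomial

theorem irreducible_of_coeff_zero_eq_one {R : Type*} [CommSemiring R] [NoZeroDivisors R] {Q : R[X]}
    (hQ0 : Q.coeff 0 = 1) (hQ : Q.natDegree ≠ 0)
    (hfactor : ∀ F G : R[X], F * G = Q → F.coeff 0 = 1 → G.coeff 0 = 1 →
      F.natDegree = 0 ∨ G.natDegree = 0) :
    Irreducible Q := by
  refine ⟨fun hu => hQ (natDegree_eq_zero_of_isUnit hu), fun F G hFG => ?_⟩
  have hFG0 : F.coeff 0 * G.coeff 0 = 1 := by rw [← mul_coeff_zero, ← hFG, hQ0]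
  obtain ⟨u, hu⟩ := IsUnit.of_mul_eq_one _ hFG0
  have isUnit_of_natDegree_eq_zero (P : R[X]) (hP : P.natDegree = 0) (hP0 : IsUnit (P.coeff 0)) :
      IsUnit P := by
    rw [eq_C_of_natDegree_eq_zero hP]
    exact isUnit_C.mpr hP0
  have hdeg := hfactor (C (↑u⁻¹ : R) * F) (C (u : R) * G)
    (by rw [mul_mul_mul_comm, ← C_mul, Units.inv_mul, C_1, one_mul, hFG])
    (by rw [coeff_C_mul, ← hu, Units.inv_mul])
    (by rw [coeff_C_mul, hu, hFG0])
  rw [natDegree_C_mul_of_isUnit u⁻¹.isUnit, natDegree_C_mul_of_isUnit u.isUnit] at hdeg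
  exact hdeg.imp (isUnit_of_natDegree_eq_zero F · ⟨u, hu⟩)
    (isUnit_of_natDegree_eq_zero G · (IsUnit.of_mul_eq_one_right _ hFG0))

theorem eq_C_mul_X_pow_of_mul_eq_X_pow {u v : ℤ[X]} {n : ℕ} (h : u * v = X ^ n) :
    ∃ ε : ℤ, (ε = 1 ∨ ε = -1) ∧ ∃ i j, i + j = n ∧ u = C ε * X ^ i ∧ v = C ε * X ^ j := by
  obtain ⟨i, j, b, c, hij, hbc, rfl, rfl⟩ :=
    mul_eq_mul_prime_pow prime_X (a := 1) (by rw [h, one_mul])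
  obtain ⟨ε, hε, rfl⟩ := isUnit_iff.mp (IsUnit.of_mul_eq_one _ hbc.symm)
  have hεε : C ε * C ε = 1 := by
    rcases Int.isUnit_iff.mp hε with rfl | rfl <;> simp
  have hc : c = C ε := by
    linear_combination C ε * hbc.symm - c * hεε
  exact ⟨ε, Int.isUnit_iff.mp hε, i, j, hij, rfl, by rw [hc]⟩

end Polynomial

section

open Polynomial Polynomial.Bivariate

variable {a : ℕ}

theorem not_isSquare_X_pow_mul (ha : 1 ≤ a) :
    ¬IsSquare (X ^ a * (4 * X ^ (2 * a) + 17 * X ^ a + 4) : ℤ[X]) := by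
  intro hsq
  have h16 : evalRingHom 16 (X ^ a * (4 * X ^ (2 * a) + 17 * X ^ a + 4) : ℤ[X]) =
      (4 ^ a) ^ 2 * (4 * (4 ^ a) ^ 4 + 17 * (4 ^ a) ^ 2 + 4) := by
    simp only [coe_evalRingHom, eval_mul, eval_add, eval_pow, eval_X, eval_ofNat]
    rw [show (16 : ℤ) = 4 ^ 2 by norm_num]
    simp only [← pow_mul]
    ring
  have hS : (4 : ℤ) ≤ 4 ^ a := le_self_pow₀ (by norm_num) (by omega)
  exact Int.not_isSquare_sq_mul_of_not_isSquare (by positivity)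
    (Int.not_isSquare_four_mul_pow_four_add hS) (h16 ▸ hsq.map (evalRingHom 16))

theorem false_of_linear_factor_coeffs (ha : 1 ≤ a) {f g₁ g₂ g₃ : ℤ[X]} (h₁ : f + g₁ = -X ^ a)
    (h₂ : g₂ + f * g₁ = -((X ^ a + 1) ^ 2 * X ^ a)) (h₃ : g₃ + f * g₂ = -X ^ (3 * a))
    (h₄ : f * g₃ = X ^ (4 * a)) : False := by
  obtain ⟨ε, hε, i, j, -, rfl, -⟩ := eq_C_mul_X_pow_of_mul_eq_X_pow h₄
  have hεε : C ε ^ 2 = 1 := by rcases hε with rfl | rfl <;> simp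
  -- `-f` is a root of the reversed quartic; only `i = a` lets a left exponent reach `2a + 2i`
  have key : X ^ (4 * a) + C ε * X ^ (3 * a + i) + C ε * X ^ (a + 3 * i) + X ^ (4 * i) =
      X ^ (3 * a + 2 * i) + 2 * X ^ (2 * a + 2 * i) + X ^ (a + 2 * i) := by
    linear_combination
      -h₄ + (C ε * X ^ i) * h₃ - (C ε * X ^ i) ^ 2 * h₂ + (C ε * X ^ i) ^ 3 * h₁
        + ((X ^ a + 1) ^ 2 * X ^ (a + 2 * i) - C ε * X ^ (a + 3 * i)
          - (C ε ^ 2 + 1) * X ^ (4 * i)) * hεε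
  have hc := congrArg (coeff · (2 * a + 2 * i)) key
  simp only [coeff_add, coeff_C_mul_X_pow, coeff_X_pow, coeff_ofNat_mul] at hc
  split_ifs at hc <;> omega

theorem false_of_quadratic_factor_coeffs (ha : 1 ≤ a) {b c d e : ℤ[X]} (h₁ : b + d = -X ^ a)
    (h₂ : c + e + b * d = -((X ^ a + 1) ^ 2 * X ^ a)) (h₃ : b * e + c * d = -X ^ (3 * a))
    (h₄ : c * e = X ^ (4 * a)) : False := by
  obtain ⟨ε, hε, i, j, hij, rfl, rfl⟩ := eq_C_mul_X_pow_of_mul_eq_X_pow h₄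
  wlog hle : i ≤ j generalizing b d i j
  · exact this (b := d) (d := b) (by linear_combination h₁) j i (by omega)
      (by linear_combination h₂) (by linear_combination h₃) (by linear_combination h₄) (by omega)
  obtain ⟨m, rfl⟩ : ∃ m, j = i + 2 * m := ⟨2 * a - i, by omega⟩
  have h₃' : C ε * (b * X ^ (2 * m) + d) = -X ^ (a + m) := by
    apply mul_left_cancel₀ (pow_ne_zero i X_ne_zero)
    rw [show 3 * a = i + (a + m) by omega] at h₃
    linear_combination h₃
  have hε1 : ε = 1 := by
    have e₁ := congrArg (eval 1) h₁
    have e₃ := congrArg (eval 1) h₃'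
    simp only [eval_add, eval_mul, eval_neg, eval_pow, eval_X, eval_C, one_pow, mul_one] at e₁ e₃
    rcases hε with rfl | rfl <;> linarith
  subst hε1
  simp only [C_1, one_mul] at h₂ h₃'
  rcases Nat.eq_zero_or_pos m with rfl | hm
  · obtain rfl : i = 2 * a := by omega
    -- `(b - d)² = (b + d)² - 4bd`
    refine not_isSquare_X_pow_mul ha ⟨b - d, ?_⟩
    linear_combination -(b + d - X ^ a) * h₁ + 4 * h₂
  · have hXm : (X ^ m - 1 : ℤ[X]) ≠ 0 := X_pow_sub_C_ne_zero hm 1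
    -- `(X ^ m - 1) (b (X ^ m + 1) + X ^ a) = 0`, and at `X = 1` the second factor is odd
    have hb : b * (X ^ m + 1) = -X ^ a :=
      mul_left_cancel₀ hXm (by linear_combination h₃' - h₁)
    have e := congrArg (eval 1) hb
    simp only [eval_add, eval_mul, eval_neg, eval_pow, eval_X, eval_one, one_pow] at e
    omega

noncomputable def quartic (a : ℕ) : ℤ[X][Y] :=
  1 - C (X ^ a) * Y - C ((X ^ a + 1) ^ 2 * X ^ a) * Y ^ 2 - C (X ^ (3 * a)) * Y ^ 3
    + C (X ^ (4 * a)) * Y ^ 4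

section
variable (a)
theorem coeff_quartic_zero : (quartic a).coeff 0 = 1 := by
  simp only [quartic, coeff_add, coeff_sub, coeff_C_mul, coeff_X_pow, coeff_one, coeff_X]; norm_num
theorem coeff_quartic_one : (quartic a).coeff 1 = -X ^ a := by
  simp only [quartic, coeff_add, coeff_sub, coeff_C_mul, coeff_X_pow, coeff_one, coeff_X]; norm_num
theorem coeff_quartic_two : (quartic a).coeff 2 = -((X ^ a + 1) ^ 2 * X ^ a) := by
  simp only [quartic, coeff_add, coeff_sub, coeff_C_mul, coeff_X_pow, coeff_one, coeff_X]; norm_num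
theorem coeff_quartic_three : (quartic a).coeff 3 = -X ^ (3 * a) := by
  simp only [quartic, coeff_add, coeff_sub, coeff_C_mul, coeff_X_pow, coeff_one, coeff_X]; norm_num
theorem coeff_quartic_four : (quartic a).coeff 4 = X ^ (4 * a) := by
  simp only [quartic, coeff_add, coeff_sub, coeff_C_mul, coeff_X_pow, coeff_one, coeff_X]; norm_num
end

theorem natDegree_quartic : (quartic a).natDegree = 4 := by
  unfold quartic
  compute_degree!

theorem natDegree_add_natDegree_of_mul_eq_quartic {F G : ℤ[X][Y]} (hFG : F * G = quartic a) :
    F.natDegree + G.natDegree = 4 := by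
  have hne : F * G ≠ 0 :=
    hFG ▸ ne_zero_of_natDegree_gt (n := 0) (by rw [natDegree_quartic]; norm_num)
  rw [← natDegree_mul (left_ne_zero_of_mul hne) (right_ne_zero_of_mul hne), hFG, natDegree_quartic]

theorem natDegree_ne_one_of_mul_eq_quartic (ha : 1 ≤ a) {F G : ℤ[X][Y]} (hFG : F * G = quartic a)
    (hF0 : F.coeff 0 = 1) (hG0 : G.coeff 0 = 1) : F.natDegree ≠ 1 := by
  intro hF
  have hG : G.natDegree = 3 := by
    have := natDegree_add_natDegree_of_mul_eq_quartic hFG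
    omega
  have c k := congrArg (coeff · k) hFG
  have c1 := c 1
  have c2 := c 2
  have c3 := c 3
  have c4 := c 4
  simp only [coeff_mul, Finset.Nat.sum_antidiagonal_eq_sum_range_succ_mk, Finset.sum_range_succ,
    Finset.sum_range_zero, Nat.reduceSub, hF0, hG0, coeff_quartic_one, coeff_quartic_two,
    coeff_quartic_three, coeff_quartic_four, zero_add, add_zero, one_mul, mul_one, zero_mul,
    mul_zero, coeff_eq_zero_of_natDegree_lt (p := F) (n := 2) (by omega),
    coeff_eq_zero_of_natDegree_lt (p := F) (n := 3) (by omega),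
    coeff_eq_zero_of_natDegree_lt (p := F) (n := 4) (by omega),
    coeff_eq_zero_of_natDegree_lt (p := G) (n := 4) (by omega)] at c1 c2 c3 c4
  exact false_of_linear_factor_coeffs ha (by linear_combination c1) c2 c3 c4

theorem natDegree_ne_two_of_mul_eq_quartic (ha : 1 ≤ a) {F G : ℤ[X][Y]} (hFG : F * G = quartic a)
    (hF0 : F.coeff 0 = 1) (hG0 : G.coeff 0 = 1) : F.natDegree ≠ 2 := by
  intro hF
  have hG : G.natDegree = 2 := by
    have := natDegree_add_natDegree_of_mul_eq_quartic hFG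
    omega
  have c k := congrArg (coeff · k) hFG
  have c1 := c 1
  have c2 := c 2
  have c3 := c 3
  have c4 := c 4
  simp only [coeff_mul, Finset.Nat.sum_antidiagonal_eq_sum_range_succ_mk, Finset.sum_range_succ,
    Finset.sum_range_zero, Nat.reduceSub, hF0, hG0, coeff_quartic_one, coeff_quartic_two,
    coeff_quartic_three, coeff_quartic_four, zero_add, add_zero, one_mul, mul_one, zero_mul,
    mul_zero, coeff_eq_zero_of_natDegree_lt (p := F) (n := 3) (by omega),
    coeff_eq_zero_of_natDegree_lt (p := F) (n := 4) (by omega),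
    coeff_eq_zero_of_natDegree_lt (p := G) (n := 3) (by omega),
    coeff_eq_zero_of_natDegree_lt (p := G) (n := 4) (by omega)] at c1 c2 c3 c4
  exact false_of_quadratic_factor_coeffs (b := F.coeff 1) (d := G.coeff 1) ha
    (by linear_combination c1) (by linear_combination c2) (by linear_combination c3) c4

theorem irreducible_quartic (ha : 1 ≤ a) : Irreducible (quartic a) := by
  refine irreducible_of_coeff_zero_eq_one (coeff_quartic_zero a) (by simp [natDegree_quartic])
    fun F G hFG hF0 hG0 => ?_
  have hdeg := natDegree_add_natDegree_of_mul_eq_quartic hFG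
  have hF1 := natDegree_ne_one_of_mul_eq_quartic ha hFG hF0 hG0
  have hF2 := natDegree_ne_two_of_mul_eq_quartic ha hFG hF0 hG0
  have hG1 := natDegree_ne_one_of_mul_eq_quartic ha (mul_comm F G ▸ hFG) hG0 hF0
  omega

end

open MvPolynomial

theorem stmt_14 (a : ℕ) (ha : 1 ≤ a) :
    Irreducible
      (1 - (X 0) ^ a * X 1 - ((X 0) ^ a + 1) ^ 2 * (X 0) ^ a * (X 1) ^ 2
        - (X 0) ^ (3 * a) * (X 1) ^ 3 + (X 0) ^ (4 * a) * (X 1) ^ 4 :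
        MvPolynomial (Fin 2) ℤ) := by
  convert (MulEquiv.irreducible_iff (Polynomial.Bivariate.equivMvPolynomial ℤ)).mpr
    (irreducible_quartic ha)
  simp [quartic]
end

section
/- The polynomial 1 + (−x⁷ + 4x⁶ − 8x⁴ + 4x² − x)·y² + x⁸·y⁴ is irreducible in ℚ(x)[y], hence irreducible in ℤ[x,y]. -/
/-!
In `ℤ[x][y]` the polynomial has constant coefficient `1`, so it is irreducible as soon as its
reverse `y⁴ + f₂ y² + x⁸` is. A monic biquadratic `y⁴ + p y² + r` over a domain can only split as
`(y² + a y + b)(y² - a y + d)`, and comparing coefficients leaves two cases: `a = 0` with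
`b + d = p`, `b d = r` (a linear factor `y - c` yields such a pair too, with `b = -c²`), or `b = d`
with `b² = r` and `2 b - p = a²`. For `p = f₂`, `r = x⁸`, the first case forces `b = ±xⁱ`,
`d = ±xʲ`, which is incompatible with the values `f₂(1) = -2` and `f₂(2) = 14`; in the second case
`2 (±x⁴) - f₂` has odd degree 7, so it is not a square.
-/

open Polynomial

namespace Polynomial

section Semiring

variable {R : Type*} [Semiring R]

theorem Monic.eq_X_sq_add_C_mul_X_add_C {p : R[X]} (hp : p.Monic) (h : p.natDegree = 2) :
    p = X ^ 2 + C (p.coeff 1) * X + C (p.coeff 0) := by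
  conv_lhs => rw [p.as_sum_range_C_mul_X_pow, h]
  rw [Finset.sum_range_succ, Finset.sum_range_succ, Finset.sum_range_one, ← h,
    hp.coeff_natDegree, h]
  simp only [C_1, pow_zero, pow_one, mul_one, one_mul]
  abel

theorem reverse_C_mul_X_pow_four_add_C_mul_X_sq_add_C {a b c : R} (ha : a ≠ 0) :
    (C a * X ^ 4 + C b * X ^ 2 + C c).reverse = C c * X ^ 4 + C b * X ^ 2 + C a := by
  have hdeg : (C a * X ^ 4 + C b * X ^ 2 + C c).natDegree = 4 := by compute_degree!
  rw [reverse, hdeg, reflect_add, reflect_add, reflect_C_mul_X_pow, reflect_C_mul_X_pow,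
    reflect_C, revAt_le (by norm_num), revAt_le (by norm_num)]
  simp only [Nat.sub_self, pow_zero, mul_one]
  abel

variable [NoZeroDivisors R]

theorem even_natDegree_of_isSquare {p : R[X]} (h : IsSquare p) : Even p.natDegree := by
  obtain ⟨t, rfl⟩ := h
  rcases eq_or_ne t 0 with rfl | ht
  · simp
  · exact ⟨_, natDegree_mul ht ht⟩

end Semiring

section CommSemiring

variable {R : Type*} [CommSemiring R] [NoZeroDivisors R] [Nontrivial R]

theorem isUnit_of_isUnit_reverse {p : R[X]} (h0 : IsUnit (p.coeff 0)) (h : IsUnit p.reverse) :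
    IsUnit p := by
  have hdeg := natDegree_eq_zero_of_isUnit h
  rw [reverse_natDegree, natTrailingDegree_eq_zero.mpr (Or.inr h0.ne_zero), Nat.sub_zero] at hdeg
  rw [eq_C_of_natDegree_eq_zero hdeg]
  exact isUnit_C.mpr h0

theorem irreducible_of_irreducible_reverse {p : R[X]} (h0 : IsUnit (p.coeff 0))
    (h : Irreducible p.reverse) : Irreducible p := by
  refine ⟨fun hp => h.not_isUnit ?_, fun a b hab => ?_⟩
  · obtain ⟨u, -, rfl⟩ := Polynomial.isUnit_iff.mp hp
    rwa [reverse_C]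
  · rw [hab, mul_coeff_zero] at h0
    rw [hab, reverse_mul_of_domain] at h
    exact (h.isUnit_or_isUnit rfl).imp
      (isUnit_of_isUnit_reverse (isUnit_of_mul_isUnit_left h0))
      (isUnit_of_isUnit_reverse (isUnit_of_mul_isUnit_right h0))

end CommSemiring

section CommRing

variable {R : Type*} [CommRing R]

theorem coeff_eqs_of_quadratic_mul_quadratic_eq {a₁ a₀ b₁ b₀ p r : R}
    (h : (X ^ 2 + C a₁ * X + C a₀) * (X ^ 2 + C b₁ * X + C b₀) = X ^ 4 + C p * X ^ 2 + C r) :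
    a₁ + b₁ = 0 ∧ a₀ + b₀ + a₁ * b₁ = p ∧ a₁ * b₀ + a₀ * b₁ = 0 ∧ a₀ * b₀ = r := by
  have hexp : (X ^ 2 + C a₁ * X + C a₀) * (X ^ 2 + C b₁ * X + C b₀) = X ^ 4 + C (a₁ + b₁) * X ^ 3
      + C (a₀ + b₀ + a₁ * b₁) * X ^ 2 + C (a₁ * b₀ + a₀ * b₁) * X + C (a₀ * b₀) := by
    simp only [C_add, C_mul]; ring
  have hk := fun k => congrArg (coeff · k) (hexp ▸ h)
  simp only [coeff_add, coeff_C_mul, coeff_X_pow, coeff_X, coeff_C] at hk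
  exact ⟨by simpa using hk 3, by simpa using hk 2, by simpa using hk 1, by simpa using hk 0⟩

variable [IsDomain R]

theorem exists_isUnit_eq_C_mul_X_pow_of_dvd_X_pow {b : R[X]} {n : ℕ} (h : b ∣ X ^ n) :
    ∃ u : R, IsUnit u ∧ ∃ i : ℕ, b = C u * X ^ i := by
  obtain ⟨i, -, hi⟩ := (dvd_prime_pow prime_X n).mp h
  obtain ⟨v, hv⟩ := hi.symm
  obtain ⟨u, hu, huv⟩ := Polynomial.isUnit_iff.mp v.isUnit
  exact ⟨u, hu, i, by rw [← hv, ← huv, mul_comm]⟩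

theorem irreducible_X_pow_four_add_C_mul_X_sq_add_C {p r : R}
    (hpair : ∀ b d : R, b + d = p → b * d ≠ r)
    (hsq : ∀ s : R, s ^ 2 = r → ¬IsSquare (2 * s - p)) :
    Irreducible (X ^ 4 + C p * X ^ 2 + C r : R[X]) := by
  have hmonic : (X ^ 4 + C p * X ^ 2 + C r : R[X]).Monic := by monicity!
  have hdeg : (X ^ 4 + C p * X ^ 2 + C r : R[X]).natDegree = 4 := by compute_degree!
  refine hmonic.irreducible_iff_natDegree'.mpr
    ⟨fun h => by simp [h] at hdeg, fun f g hf hg hfg hg_deg => ?_⟩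
  rw [hdeg, Finset.mem_Ioc] at hg_deg
  obtain h1 | h2 : g.natDegree = 1 ∨ g.natDegree = 2 := by omega
  · obtain ⟨c, rfl⟩ : ∃ c, g = X + C c := ⟨_, hg.eq_X_add_C h1⟩
    have hroot := congrArg (eval (-c)) hfg
    simp only [eval_mul, eval_add, eval_X, eval_C, eval_pow, neg_add_cancel, mul_zero] at hroot
    exact hpair (-c ^ 2) (c ^ 2 + p) (by ring) (by linear_combination hroot)
  · have hf2 : f.natDegree = 2 := by
      have := hf.natDegree_mul hg
      rw [hfg, hdeg] at this
      omega
    rw [hf.eq_X_sq_add_C_mul_X_add_C hf2, hg.eq_X_sq_add_C_mul_X_add_C h2] at hfg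
    obtain ⟨e₃, e₂, e₁, e₀⟩ := coeff_eqs_of_quadratic_mul_quadratic_eq hfg
    rcases mul_eq_zero.mp (show f.coeff 1 * (g.coeff 0 - f.coeff 0) = 0 by
      linear_combination e₁ - f.coeff 0 * e₃) with ha | hb
    · exact hpair _ _ (by linear_combination e₂ - g.coeff 1 * ha) e₀
    · refine hsq (f.coeff 0) (by linear_combination e₀ - f.coeff 0 * hb) ⟨f.coeff 1, ?_⟩
      linear_combination -hb - f.coeff 1 * e₃ + e₂

end CommRing

end Polynomial

noncomputable def f₂ : ℤ[X] := -X ^ 7 + 4 * X ^ 6 - 8 * X ^ 4 + 4 * X ^ 2 - X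

theorem mul_ne_X_pow_eight_of_add_eq_f₂ {b d : ℤ[X]} (hsum : b + d = f₂) : b * d ≠ X ^ 8 := by
  intro hmul
  obtain ⟨u, hu, i, rfl⟩ := exists_isUnit_eq_C_mul_X_pow_of_dvd_X_pow (Dvd.intro d hmul)
  obtain ⟨v, hv, j, rfl⟩ := exists_isUnit_eq_C_mul_X_pow_of_dvd_X_pow (Dvd.intro_left _ hmul)
  have h₁ := congrArg (eval 1) hsum
  have h₂ := congrArg (eval 2) hsum
  simp only [f₂, eval_add, eval_sub, eval_mul, eval_neg, eval_pow, eval_C, eval_X, eval_ofNat,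
    one_pow, mul_one] at h₁ h₂
  rcases Int.isUnit_iff.mp hu with rfl | rfl <;> rcases Int.isUnit_iff.mp hv with rfl | rfl <;>
    norm_num at h₁
  have : (0 : ℤ) < 2 ^ i + 2 ^ j := by positivity
  linarith

theorem not_isSquare_two_mul_sub_f₂ {s : ℤ[X]} (hs : s ^ 2 = X ^ 8) : ¬IsSquare (2 * s - f₂) := by
  have hdeg : (2 * s - f₂).natDegree = 7 := by
    obtain rfl | rfl := sq_eq_sq_iff_eq_or_eq_neg.mp (hs.trans (by ring : (X : ℤ[X]) ^ 8 = (X ^ 4) ^ 2))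
    all_goals unfold f₂; compute_degree!
  exact fun hsq => (by decide : ¬Even 7) (hdeg ▸ even_natDegree_of_isSquare hsq)

theorem irreducible_C_X_pow_eight_mul_X_pow_four_add_C_f₂_mul_X_sq_add_one :
    Irreducible (C (X ^ 8) * X ^ 4 + C f₂ * X ^ 2 + 1 : ℤ[X][X]) := by
  refine irreducible_of_irreducible_reverse (by simp) ?_
  rw [← C_1, reverse_C_mul_X_pow_four_add_C_mul_X_sq_add_C (pow_ne_zero 8 X_ne_zero), C_1, one_mul]
  exact irreducible_X_pow_four_add_C_mul_X_sq_add_C (fun _ _ => mul_ne_X_pow_eight_of_add_eq_f₂)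
    fun _ => not_isSquare_two_mul_sub_f₂

open MvPolynomial

theorem stmt_16 :
    Irreducible
      (1 + (-(X 0) ^ 7 + 4 * (X 0) ^ 6 - 8 * (X 0) ^ 4 + 4 * (X 0) ^ 2 - X 0) * (X 1) ^ 2
        + (X 0) ^ 8 * (X 1) ^ 4 : MvPolynomial (Fin 2) ℤ) := by
  rw [← MulEquiv.irreducible_iff (Bivariate.equivMvPolynomial ℤ).symm]
  convert irreducible_C_X_pow_eight_mul_X_pow_four_add_C_f₂_mul_X_sq_add_one using 1
  simp only [map_add, map_one, map_mul, map_sub, map_neg, map_pow, map_ofNat,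
    Bivariate.equivMvPolynomial_symm_X_0, Bivariate.equivMvPolynomial_symm_X_1, f₂]
  ring
end
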